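/- arXiv:2506.05894 — 2 statements merged into one kernel-verified Lean document; each statement's English description precedes it below -/
import Mathlib

section
/- Let Γ̃ be a Hilbert–Schmidt Volterra integral operator on L²([0,T], R^k) with kernel κ(t,s) = 1_{t>s} K_t Y(t) Y^{-1}(s) B, where ||K||_{L^∞} ≤ C₀, Y is the fundamental matrix of dY/dt = (A + B K_t)Y, Y(0) = I_d. Then the resolvent (Γ̃ + id)^{-1} exists as a bounded operator on L²([0,T], R^k) and its operator norm is at most exp(2 T² ||B||_{L^∞}² C₀² exp(2T(||A||_{L^∞} + ||B||_{L^∞} C₀)) + 1/2). -/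
/-!
The kernel vanishes for `s ≥ t` and, by Grönwall's inequality for the fundamental matrix, is
bounded by `C = C₀ e^{LT} ‖B‖` with `L = ‖A‖ + ‖B‖ C₀`. Iterating the resulting Volterra bound
`|Γ g (t)| ≤ C ∫₀ᵗ |g|` gives `|Γⁿ⁺¹ g (t)| ≤ Cⁿ⁺¹ tⁿ / n! ∫₀ᵀ |g|`, hence
`‖Γⁿ⁺¹‖ ≤ Mⁿ⁺¹ / n!` with `M = C T`. The Neumann series `∑ (-Γ)ⁿ` therefore converges to the
inverse of `Γ + 1`, and its norm is at most `1 + M eᴹ ≤ exp (2 M² + 1/2)`.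
-/

open MeasureTheory
open scoped Matrix.Norms.L2Operator

/-- Apply a matrix to a vector of `EuclideanSpace ℝ (Fin k)`. -/
noncomputable def mvE {m n : ℕ} (M : Matrix (Fin m) (Fin n) ℝ)
    (v : EuclideanSpace ℝ (Fin n)) : EuclideanSpace ℝ (Fin m) :=
  Matrix.toEuclideanLin M v

open Set Real
open scoped Nat

section NormedRing

variable {R : Type*} [NormedRing R] {x : R} {M : ℝ}

lemma norm_neg_pow (x : R) (n : ℕ) : ‖(-x) ^ n‖ = ‖x ^ n‖ := by
  rcases Nat.even_or_odd n with h | h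
  · rw [h.neg_pow]
  · rw [h.neg_pow, norm_neg]

lemma hasSum_pow_succ_div_factorial (M : ℝ) :
    HasSum (fun n : ℕ => M ^ (n + 1) / n !) (M * exp M) := by
  simpa only [pow_succ', mul_div_assoc, ← exp_eq_exp_ℝ] using
    (NormedSpace.expSeries_div_hasSum_exp M).mul_left M

lemma summable_norm_pow_of_norm_pow_succ_le (h : ∀ n, ‖x ^ (n + 1)‖ ≤ M ^ (n + 1) / n !) :
    Summable fun n => ‖x ^ n‖ :=
  (summable_nat_add_iff 1).1 <| (hasSum_pow_succ_div_factorial M).summable.of_nonneg_of_le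
    (fun _ => norm_nonneg _) h

lemma tsum_norm_pow_le_of_norm_pow_succ_le (h : ∀ n, ‖x ^ (n + 1)‖ ≤ M ^ (n + 1) / n !) :
    ∑' n, ‖x ^ n‖ ≤ ‖(1 : R)‖ + M * exp M := by
  have hs := summable_norm_pow_of_norm_pow_succ_le h
  rw [hs.tsum_eq_zero_add, pow_zero]
  gcongr
  exact hasSum_le h ((summable_nat_add_iff 1).2 hs).hasSum (hasSum_pow_succ_div_factorial M)

lemma exists_inverse_add_one_of_norm_pow_succ_le [CompleteSpace R]
    (h : ∀ n, ‖x ^ (n + 1)‖ ≤ M ^ (n + 1) / n !) :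
    ∃ S : R, S * (x + 1) = 1 ∧ (x + 1) * S = 1 ∧ ‖S‖ ≤ ‖(1 : R)‖ + M * exp M := by
  have h' : ∀ n, ‖(-x) ^ (n + 1)‖ ≤ M ^ (n + 1) / n ! := fun n => (norm_neg_pow x _).trans_le (h n)
  have hs := summable_norm_pow_of_norm_pow_succ_le h'
  have hx : x + 1 = 1 - -x := by abel
  refine ⟨∑' n, (-x) ^ n, ?_, ?_, ?_⟩
  · rw [hx]; exact hs.of_norm.tsum_pow_mul_one_sub
  · rw [hx]; exact hs.of_norm.one_sub_mul_tsum_pow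
  · exact (norm_tsum_le_tsum_norm hs).trans (tsum_norm_pow_le_of_norm_pow_succ_le h')

end NormedRing

lemma one_add_mul_exp_le_exp (M : ℝ) : 1 + M * exp M ≤ exp (2 * M ^ 2 + 1 / 2) := by
  rcases lt_or_ge M 0 with hM | hM
  · have : M * exp M < 0 := mul_neg_of_neg_of_pos hM (exp_pos M)
    have : 1 ≤ exp (2 * M ^ 2 + 1 / 2) := one_le_exp (by positivity)
    linarith
  calc 1 + M * exp M ≤ (1 + M) * exp M := by nlinarith [one_le_exp hM]
    _ ≤ exp M * exp M := by gcongr; linarith [add_one_le_exp M]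
    _ = exp (2 * M) := by rw [← exp_add, two_mul]
    _ ≤ exp (2 * M ^ 2 + 1 / 2) := exp_le_exp.2 (by nlinarith [sq_nonneg (2 * M - 1)])

lemma Matrix.l2_opNorm_one_le {𝕜 n : Type*} [RCLike 𝕜] [Fintype n] [DecidableEq n] :
    ‖(1 : Matrix n n 𝕜)‖ ≤ 1 := by
  rw [Matrix.cstar_norm_def, map_one]
  exact ContinuousLinearMap.norm_id_le

lemma norm_mul_inv_le_exp_of_hasDerivAt {n : Type*} [Fintype n] [DecidableEq n]
    {Y F : ℝ → Matrix n n ℝ}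
    {a b L : ℝ} (hab : a ≤ b) (hY : ∀ t ∈ Icc a b, HasDerivAt Y (F t * Y t) t)
    (hF : ∀ t ∈ Icc a b, ‖F t‖ ≤ L) : ‖Y b * (Y a)⁻¹‖ ≤ exp (L * (b - a)) := by
  by_cases ha : IsUnit (Y a).det
  swap
  · rw [Matrix.nonsing_inv_apply_not_isUnit _ ha, mul_zero, norm_zero]
    positivity
  have hcont : ContinuousOn (fun t => Y t * (Y a)⁻¹) (Icc a b) := fun t ht =>
    ((hY t ht).continuousAt.mul continuousAt_const).continuousWithinAt
  have hderiv : ∀ t ∈ Ico a b, HasDerivWithinAt (fun t => Y t * (Y a)⁻¹)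
      (F t * (Y t * (Y a)⁻¹)) (Ici t) t := fun t ht => by
    simpa only [mul_assoc] using ((hY t (Ico_subset_Icc_self ht)).mul_const _).hasDerivWithinAt
  have hinit : ‖Y a * (Y a)⁻¹‖ ≤ 1 := by
    rw [Matrix.mul_nonsing_inv _ ha]
    exact Matrix.l2_opNorm_one_le
  have hgrowth : ∀ t ∈ Ico a b, ‖F t * (Y t * (Y a)⁻¹)‖ ≤ L * ‖Y t * (Y a)⁻¹‖ + 0 := fun t ht => by
    rw [add_zero]
    exact (Matrix.l2_opNorm_mul _ _).trans (by gcongr; exact hF t (Ico_subset_Icc_self ht))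
  simpa [gronwallBound_ε0] using norm_le_gronwallBound_of_norm_deriv_right_le
    hcont hderiv hinit hgrowth b (right_mem_Icc.2 hab)

lemma norm_feedback_kernel_le {d k : ℕ} {T CA CB C₀ : ℝ} {A : ℝ → Matrix (Fin d) (Fin d) ℝ}
    {B : ℝ → Matrix (Fin d) (Fin k) ℝ} {K : ℝ → Matrix (Fin k) (Fin d) ℝ}
    {Y : ℝ → Matrix (Fin d) (Fin d) ℝ} (hAbd : ∀ t ∈ Icc 0 T, ‖A t‖ ≤ CA)
    (hBbd : ∀ t ∈ Icc 0 T, ‖B t‖ ≤ CB) (hKbd : ∀ t ∈ Icc 0 T, ‖K t‖ ≤ C₀)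
    (hY : ∀ t ∈ Icc 0 T, HasDerivAt Y ((A t + B t * K t) * Y t) t) {s t : ℝ}
    (hs : s ∈ Icc 0 T) (ht : t ∈ Icc 0 T) (hst : s ≤ t) :
    ‖K t * (Y t * (Y s)⁻¹) * B s‖ ≤ C₀ * exp ((CA + CB * C₀) * T) * CB := by
  have hCB : 0 ≤ CB := (norm_nonneg _).trans (hBbd s hs)
  have hC₀ : 0 ≤ C₀ := (norm_nonneg _).trans (hKbd s hs)
  have hL : 0 ≤ CA + CB * C₀ := add_nonneg ((norm_nonneg _).trans (hAbd s hs)) (mul_nonneg hCB hC₀)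
  have hsub : Icc s t ⊆ Icc 0 T := Icc_subset_Icc hs.1 ht.2
  have hF : ∀ u ∈ Icc s t, ‖A u + B u * K u‖ ≤ CA + CB * C₀ := fun u hu =>
    (norm_add_le _ _).trans <| add_le_add (hAbd u (hsub hu)) <| (Matrix.l2_opNorm_mul _ _).trans <|
      mul_le_mul (hBbd u (hsub hu)) (hKbd u (hsub hu)) (norm_nonneg _) hCB
  have hYst : ‖Y t * (Y s)⁻¹‖ ≤ exp ((CA + CB * C₀) * T) :=
    (norm_mul_inv_le_exp_of_hasDerivAt hst (fun u hu => hY u (hsub hu)) hF).trans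
      (exp_le_exp.2 (by gcongr; linarith [hs.1, ht.2]))
  calc ‖K t * (Y t * (Y s)⁻¹) * B s‖ ≤ ‖K t‖ * ‖Y t * (Y s)⁻¹‖ * ‖B s‖ :=
        (Matrix.l2_opNorm_mul _ _).trans
          (mul_le_mul_of_nonneg_right (Matrix.l2_opNorm_mul _ _) (norm_nonneg _))
    _ ≤ C₀ * exp ((CA + CB * C₀) * T) * CB := by gcongr; exacts [hKbd t ht, hBbd s hs]

lemma norm_mvE_le {m n : ℕ} (M : Matrix (Fin m) (Fin n) ℝ) (v : EuclideanSpace ℝ (Fin n)) :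
    ‖mvE M v‖ ≤ ‖M‖ * ‖v‖ :=
  M.l2_opNorm_mulVec v

lemma norm_integral_volterra_le {m n : ℕ} {T C t : ℝ} (hC : 0 ≤ C) (ht : t ≤ T)
    (κ : ℝ → Matrix (Fin m) (Fin n) ℝ) (hκ : ∀ s ∈ Icc 0 T, s < t → ‖κ s‖ ≤ C)
    {f : ℝ → EuclideanSpace ℝ (Fin n)} (hf : IntegrableOn (fun s => ‖f s‖) (Icc 0 T)) :
    ‖∫ s in Icc 0 T, mvE (if s < t then κ s else 0) (f s)‖ ≤ C * ∫ s in Icc 0 t, ‖f s‖ := by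
  have hpt : ∀ s ∈ Icc 0 T, ‖mvE (if s < t then κ s else 0) (f s)‖ ≤
      (Icc 0 t).indicator (fun s => C * ‖f s‖) s := by
    intro s hs
    by_cases hst : s < t
    · rw [if_pos hst, indicator_of_mem (show s ∈ Icc 0 t from ⟨hs.1, hst.le⟩)]
      exact (norm_mvE_le _ _).trans (by gcongr; exact hκ s hs hst)
    · rw [if_neg hst]
      simpa [mvE] using indicator_nonneg (fun _ _ => by positivity) s
  calc _ ≤ ∫ s in Icc 0 T, ‖mvE (if s < t then κ s else 0) (f s)‖ :=
        norm_integral_le_integral_norm _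
    _ ≤ ∫ s in Icc 0 T, (Icc 0 t).indicator (fun s => C * ‖f s‖) s :=
        integral_mono_of_nonneg (ae_of_all _ fun _ => norm_nonneg _)
          ((hf.const_mul C).indicator measurableSet_Icc)
          ((ae_restrict_iff' measurableSet_Icc).2 (ae_of_all _ hpt))
    _ = C * ∫ s in Icc 0 t, ‖f s‖ := by
        rw [integral_indicator measurableSet_Icc, Measure.restrict_restrict measurableSet_Icc,
          inter_eq_left.2 (Icc_subset_Icc_right ht), integral_const_mul]


section Volterra

variable {E : Type*} [NormedAddCommGroup E] {T C : ℝ}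

lemma integral_norm_le_sqrt_mul_norm (hT : 0 ≤ T) (g : Lp E 2 (volume.restrict (Icc (0 : ℝ) T))) :
    ∫ s in Icc 0 T, ‖g s‖ ≤ √T * ‖g‖ := by
  have hvol : volume.restrict (Icc (0 : ℝ) T) univ = ENNReal.ofReal T := by simp
  have hg := Lp.aestronglyMeasurable g
  have h12 := eLpNorm_le_eLpNorm_mul_rpow_measure_univ (p := 1) (q := 2) (by norm_num) hg
  rw [integral_norm_eq_lintegral_enorm hg, ← eLpNorm_one_eq_lintegral_enorm, Lp.norm_def,
    sqrt_eq_rpow]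
  norm_num [hvol] at h12
  have := ENNReal.toReal_mono (by finiteness) h12
  rwa [ENNReal.toReal_mul, ← ENNReal.toReal_rpow, ENNReal.toReal_ofReal hT, mul_comm] at this

lemma norm_le_sqrt_mul_of_ae_bound (hT : 0 ≤ T) {g : Lp E 2 (volume.restrict (Icc (0 : ℝ) T))}
    {c : ℝ} (hc : 0 ≤ c) (hg : ∀ᵐ t ∂volume.restrict (Icc (0 : ℝ) T), ‖g t‖ ≤ c) :
    ‖g‖ ≤ √T * c := by
  have := Lp.norm_le_of_ae_bound hc hg
  rwa [measureUnivNNReal, Measure.restrict_apply_univ, Real.volume_Icc, sub_zero,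
    ENNReal.coe_toNNReal_eq_toReal, ENNReal.toReal_ofReal hT, ENNReal.toReal_ofNat,
    ← one_div, ← sqrt_eq_rpow] at this

variable [NormedSpace ℝ E]
  {Γ : Lp E 2 (volume.restrict (Icc (0 : ℝ) T)) →L[ℝ] Lp E 2 (volume.restrict (Icc (0 : ℝ) T))}

lemma ae_norm_pow_succ_apply_le (hC : 0 ≤ C)
    (hΓ : ∀ f, ∀ᵐ t ∂volume.restrict (Icc (0 : ℝ) T), ‖Γ f t‖ ≤ C * ∫ s in Icc 0 t, ‖f s‖)
    (g : Lp E 2 (volume.restrict (Icc (0 : ℝ) T))) (n : ℕ) :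
    ∀ᵐ t ∂volume.restrict (Icc (0 : ℝ) T),
      ‖(Γ ^ (n + 1)) g t‖ ≤ C ^ (n + 1) * (∫ s in Icc 0 T, ‖g s‖) / n ! * t ^ n := by
  have hg : IntegrableOn (fun s => ‖g s‖) (Icc 0 T) := ((Lp.memLp g).integrable one_le_two).norm
  induction n with
  | zero =>
    filter_upwards [hΓ g, ae_restrict_mem measurableSet_Icc] with t ht hmem
    have : ∫ s in Icc 0 t, ‖g s‖ ≤ ∫ s in Icc 0 T, ‖g s‖ :=
      setIntegral_mono_set hg (ae_of_all _ fun s => norm_nonneg _)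
        (Icc_subset_Icc_right hmem.2).eventuallyLE
    simpa using ht.trans (mul_le_mul_of_nonneg_left this hC)
  | succ n ih =>
    set c := C ^ (n + 1) * (∫ s in Icc 0 T, ‖g s‖) / (n !)
    filter_upwards [hΓ ((Γ ^ (n + 1)) g), ae_restrict_mem measurableSet_Icc] with t ht hmem
    have hle : ∫ s in Icc 0 t, ‖(Γ ^ (n + 1)) g s‖ ≤ ∫ s in Icc 0 t, c * s ^ n :=
      integral_mono_of_nonneg (ae_of_all _ fun s => norm_nonneg _)
        (continuous_const.mul (continuous_pow n)).integrableOn_Icc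
        (ae_restrict_of_ae_restrict_of_subset (Icc_subset_Icc_right hmem.2) ih)
    have hint : ∫ s in Icc 0 t, c * s ^ n = c * (t ^ (n + 1) / (n + 1)) := by
      rw [integral_Icc_eq_integral_Ioc, ← intervalIntegral.integral_of_le hmem.1,
        intervalIntegral.integral_const_mul, integral_pow]
      simp
    rw [pow_succ']
    calc ‖Γ ((Γ ^ (n + 1)) g) t‖ ≤ C * ∫ s in Icc 0 t, ‖(Γ ^ (n + 1)) g s‖ := ht
      _ ≤ C * (c * (t ^ (n + 1) / (n + 1))) := by rw [← hint]; gcongr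
      _ = _ := by
        simp only [c, Nat.factorial_succ, Nat.cast_mul]
        field_simp
        push_cast
        ring

lemma norm_pow_succ_le (hT : 0 ≤ T) (hC : 0 ≤ C)
    (hΓ : ∀ f, ∀ᵐ t ∂volume.restrict (Icc (0 : ℝ) T), ‖Γ f t‖ ≤ C * ∫ s in Icc 0 t, ‖f s‖)
    (n : ℕ) : ‖Γ ^ (n + 1)‖ ≤ (C * T) ^ (n + 1) / n ! := by
  refine ContinuousLinearMap.opNorm_le_bound _ (by positivity) fun g => ?_
  set I := ∫ s in Icc 0 T, ‖g s‖
  have hbound : ∀ᵐ t ∂volume.restrict (Icc (0 : ℝ) T),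
      ‖(Γ ^ (n + 1)) g t‖ ≤ C ^ (n + 1) * I / n ! * T ^ n := by
    filter_upwards [ae_norm_pow_succ_apply_le hC hΓ g n, ae_restrict_mem measurableSet_Icc]
      with t ht hmem
    exact ht.trans (by gcongr; exacts [hmem.1, hmem.2])
  have hI : 0 ≤ I := integral_nonneg fun _ => norm_nonneg _
  calc ‖(Γ ^ (n + 1)) g‖ ≤ √T * (C ^ (n + 1) * I / n ! * T ^ n) :=
        norm_le_sqrt_mul_of_ae_bound hT (by positivity) hbound
    _ ≤ √T * (C ^ (n + 1) * (√T * ‖g‖) / n ! * T ^ n) := by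
        gcongr; exact integral_norm_le_sqrt_mul_norm hT g
    _ = (C * T) ^ (n + 1) / n ! * ‖g‖ := by
        linear_combination (C ^ (n + 1) * ‖g‖ / n ! * T ^ n) * mul_self_sqrt hT

end Volterra

theorem stmt3_general {d k : ℕ} (T CA CB C₀ : ℝ) (hT : 0 < T)
    (A : ℝ → Matrix (Fin d) (Fin d) ℝ) (B : ℝ → Matrix (Fin d) (Fin k) ℝ)
    (K : ℝ → Matrix (Fin k) (Fin d) ℝ) (Y : ℝ → Matrix (Fin d) (Fin d) ℝ)
    (hAbd : ∀ t ∈ Set.Icc (0 : ℝ) T, ‖A t‖ ≤ CA)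
    (hBbd : ∀ t ∈ Set.Icc (0 : ℝ) T, ‖B t‖ ≤ CB)
    (hKbd : ∀ t ∈ Set.Icc (0 : ℝ) T, ‖K t‖ ≤ C₀)
    (hY : ∀ t ∈ Set.Icc (0 : ℝ) T, HasDerivAt Y ((A t + B t * K t) * Y t) t)
    (Γ : Lp (EuclideanSpace ℝ (Fin k)) 2 (volume.restrict (Set.Icc (0 : ℝ) T)) →L[ℝ]
         Lp (EuclideanSpace ℝ (Fin k)) 2 (volume.restrict (Set.Icc (0 : ℝ) T)))
    (hΓ : ∀ f : Lp (EuclideanSpace ℝ (Fin k)) 2 (volume.restrict (Set.Icc (0 : ℝ) T)),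
      ∀ᵐ t ∂(volume.restrict (Set.Icc (0 : ℝ) T)),
        (Γ f : ℝ → EuclideanSpace ℝ (Fin k)) t =
          ∫ s in Set.Icc (0 : ℝ) T,
            mvE (if s < t then K t * (Y t * (Y s)⁻¹) * B s else 0) (f s)) :
    ∃ S : Lp (EuclideanSpace ℝ (Fin k)) 2 (volume.restrict (Set.Icc (0 : ℝ) T)) →L[ℝ]
          Lp (EuclideanSpace ℝ (Fin k)) 2 (volume.restrict (Set.Icc (0 : ℝ) T)),
      S.comp (Γ + 1) = 1 ∧ (Γ + 1).comp S = 1 ∧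
      ‖S‖ ≤ Real.exp (2 * T ^ 2 * CB ^ 2 * C₀ ^ 2 *
        Real.exp (2 * T * (CA + CB * C₀)) + 1 / 2) := by
  have h0 : (0 : ℝ) ∈ Icc 0 T := left_mem_Icc.2 hT.le
  set C := C₀ * exp ((CA + CB * C₀) * T) * CB
  have hC : 0 ≤ C := (norm_nonneg _).trans (norm_feedback_kernel_le hAbd hBbd hKbd hY h0 h0 le_rfl)
  have hvolterra : ∀ f, ∀ᵐ t ∂volume.restrict (Icc (0 : ℝ) T),
      ‖Γ f t‖ ≤ C * ∫ s in Icc 0 t, ‖f s‖ := fun f => by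
    filter_upwards [hΓ f, ae_restrict_mem measurableSet_Icc] with t hΓt ht
    rw [hΓt]
    exact norm_integral_volterra_le hC ht.2 _
      (fun s hs hst => norm_feedback_kernel_le hAbd hBbd hKbd hY hs ht hst.le)
      ((Lp.memLp f).integrable one_le_two).norm
  obtain ⟨S, hSΓ, hΓS, hS⟩ :=
    exists_inverse_add_one_of_norm_pow_succ_le (norm_pow_succ_le hT.le hC hvolterra)
  refine ⟨S, hSΓ, hΓS, hS.trans ?_⟩
  have hexp : exp ((CA + CB * C₀) * T) ^ 2 = exp (2 * T * (CA + CB * C₀)) := by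
    rw [sq, ← exp_add]; ring_nf
  calc ‖(1 : Lp (EuclideanSpace ℝ (Fin k)) 2 (volume.restrict (Icc (0 : ℝ) T)) →L[ℝ] _)‖ +
        C * T * exp (C * T) ≤ 1 + C * T * exp (C * T) := by
        gcongr; exact ContinuousLinearMap.norm_id_le
    _ ≤ exp (2 * (C * T) ^ 2 + 1 / 2) := one_add_mul_exp_le_exp _
    _ = _ := by
        rw [show (C * T) ^ 2 = T ^ 2 * CB ^ 2 * C₀ ^ 2 * exp ((CA + CB * C₀) * T) ^ 2 by ring, hexp]
        ring_nf

/-- For the Hilbert–Schmidt Volterra integral operator `Γ̃` on `L²([0,T], ℝ^k)`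
with kernel `κ(t,s) = 1_{t>s} K_t Y(t) Y(s)⁻¹ B(s)`, where `‖K‖_{L^∞} ≤ C₀` and `Y` is the
fundamental matrix of `dY/dt = (A + B K_t) Y`, `Y(0) = I`, the resolvent `(Γ̃ + id)⁻¹` exists
as a bounded operator and
`‖(Γ̃ + id)⁻¹‖_op ≤ exp(2 T² ‖B‖² C₀² exp(2T(‖A‖ + ‖B‖ C₀)) + 1/2)`. -/
theorem stmt3 {d k : ℕ} (T CA CB C₀ : ℝ) (hT : 0 < T)
    (A : ℝ → Matrix (Fin d) (Fin d) ℝ) (B : ℝ → Matrix (Fin d) (Fin k) ℝ)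
    (K : ℝ → Matrix (Fin k) (Fin d) ℝ) (Y : ℝ → Matrix (Fin d) (Fin d) ℝ)
    (hA : ContinuousOn A (Set.Icc 0 T)) (hB : ContinuousOn B (Set.Icc 0 T))
    (hAbd : ∀ t ∈ Set.Icc (0 : ℝ) T, ‖A t‖ ≤ CA)
    (hBbd : ∀ t ∈ Set.Icc (0 : ℝ) T, ‖B t‖ ≤ CB)
    (hKmeas : ∀ i j, Measurable fun t => K t i j)
    (hKbd : ∀ t ∈ Set.Icc (0 : ℝ) T, ‖K t‖ ≤ C₀)
    (hY : ∀ t ∈ Set.Icc (0 : ℝ) T, HasDerivAt Y ((A t + B t * K t) * Y t) t)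
    (hY0 : Y 0 = 1)
    (Γ : Lp (EuclideanSpace ℝ (Fin k)) 2 (volume.restrict (Set.Icc (0 : ℝ) T)) →L[ℝ]
         Lp (EuclideanSpace ℝ (Fin k)) 2 (volume.restrict (Set.Icc (0 : ℝ) T)))
    (hΓ : ∀ f : Lp (EuclideanSpace ℝ (Fin k)) 2 (volume.restrict (Set.Icc (0 : ℝ) T)),
      ∀ᵐ t ∂(volume.restrict (Set.Icc (0 : ℝ) T)),
        (Γ f : ℝ → EuclideanSpace ℝ (Fin k)) t =
          ∫ s in Set.Icc (0 : ℝ) T,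
            mvE (if s < t then K t * (Y t * (Y s)⁻¹) * B s else 0) (f s)) :
    ∃ S : Lp (EuclideanSpace ℝ (Fin k)) 2 (volume.restrict (Set.Icc (0 : ℝ) T)) →L[ℝ]
          Lp (EuclideanSpace ℝ (Fin k)) 2 (volume.restrict (Set.Icc (0 : ℝ) T)),
      S.comp (Γ + 1) = 1 ∧ (Γ + 1).comp S = 1 ∧
      ‖S‖ ≤ Real.exp (2 * T ^ 2 * CB ^ 2 * C₀ ^ 2 *
        Real.exp (2 * T * (CA + CB * C₀)) + 1 / 2) :=
  stmt3_general T CA CB C₀ hT A B K Y hAbd hBbd hKbd hY Γ hΓ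
end

section
/- Let ϑ : [0,T] → S^d solve the Lyapunov ODE dϑ/dt = M(t) ϑ(t) + ϑ(t) M(t)^⊤ + D(t)D(t)^⊤ with ϑ(0) = ϑ₀ ⪰ 0 and continuous M, D. Then for all t ∈ [0,T], λ_min(ϑ(t)) ≥ λ_min(ϑ₀) exp(−2T ||M||_{L^∞}). -/
/-!
Let `C` bound `‖M‖`, `a = max λ₀ 0`, and for `ε > 0` put `ℓ(t) = a e^{-2Ct} - ε e^{(2C+1)t}`.
If `⟪v, ϑ(t) v⟫ > ℓ(t)` failed somewhere on the unit sphere, there would be a first such time `τ`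
and, by compactness of the sphere, a unit `w` with `⟪w, ϑ(τ) w⟫ = ℓ(τ)` minimal; so `w` is an
eigenvector of `ϑ(τ)` for the eigenvalue `ℓ(τ)`. Along such a `w` the Lyapunov equation gives
`d/dt ⟪w, ϑ w⟫ = 2 ℓ(τ) ⟪w, M w⟫ + ‖Dᵀ w‖² ≥ -2C |ℓ(τ)| > ℓ'(τ)`, while `⟪w, ϑ w⟫ - ℓ` is positive
before `τ` and vanishes at `τ`, forcing `d/dt ⟪w, ϑ w⟫ ≤ ℓ'(τ)`. Letting `ε → 0` gives
`⟪v, ϑ(t) v⟫ ≥ a e^{-2Ct} ‖v‖²`.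
-/

open MeasureTheory Matrix
open scoped RealInnerProductSpace Matrix.Norms.L2Operator

open Set Filter Topology Metric Real ContinuousLinearMap

lemma IsCompact.sep_exists_nonpos {α β : Type*} [TopologicalSpace α] [TopologicalSpace β]
    [T2Space α] [T2Space β] {s : Set α} {K : Set β} (hs : IsCompact s) (hK : IsCompact K)
    {f : α × β → ℝ} (hf : ContinuousOn f (s ×ˢ K)) :
    IsCompact {t ∈ s | ∃ x ∈ K, f (t, x) ≤ 0} := by
  have hsub : IsCompact (s ×ˢ K ∩ f ⁻¹' Iic 0) :=
    (hs.prod hK).of_isClosed_subset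
      (hf.preimage_isClosed_of_isClosed (hs.prod hK).isClosed isClosed_Iic) inter_subset_left
  convert hsub.image continuous_fst using 1
  ext t
  simp [and_assoc]

lemma HasDerivAt.nonpos_of_eventually_le_left {g : ℝ → ℝ} {g' τ : ℝ} (hg : HasDerivAt g g' τ)
    (hle : ∀ᶠ t in 𝓝[<] τ, g τ ≤ g t) : g' ≤ 0 := by
  refine le_of_tendsto (hasDerivAt_iff_tendsto_slope_left_right.1 hg).1 ?_
  filter_upwards [hle, self_mem_nhdsWithin] with t ht htτ
  rw [slope_def_field]
  exact div_nonpos_of_nonneg_of_nonpos (sub_nonneg.2 ht) (sub_nonpos.2 (le_of_lt htτ))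

section InnerProductSpace

variable {E F : Type*} [NormedAddCommGroup E] [InnerProductSpace ℝ E]

lemma le_inner_apply_of_forall_norm_eq_one {A : E →L[ℝ] E} {c : ℝ}
    (h : ∀ v, ‖v‖ = 1 → c ≤ ⟪v, A v⟫) (v : E) : c * ‖v‖ ^ 2 ≤ ⟪v, A v⟫ := by
  rcases eq_or_ne v 0 with rfl | hv
  · simp
  have := h (‖v‖⁻¹ • v) (norm_smul_inv_norm hv)
  rw [map_smul, real_inner_smul_left, real_inner_smul_right, ← mul_assoc, ← sq, inv_pow,
    le_inv_mul_iff₀ (by positivity)] at this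
  linarith

lemma hasDerivAt_inner_apply {Θ : ℝ → E →L[ℝ] E} {Θ' : E →L[ℝ] E} {t : ℝ}
    (hΘ : HasDerivAt Θ Θ' t) (v : E) :
    HasDerivAt (fun s => ⟪v, Θ s v⟫) ⟪v, Θ' v⟫ t := by
  simpa using (hasDerivAt_const t v).inner ℝ (hΘ.clm_apply (hasDerivAt_const t v))

lemma exists_first_time_inner_apply_le [FiniteDimensional ℝ E] {Θ : ℝ → E →L[ℝ] E}
    {ℓ : ℝ → ℝ} {a b : ℝ} (hΘ : ContinuousOn Θ (Icc a b)) (hℓ : ContinuousOn ℓ (Icc a b))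
    (ha : ∀ v, ‖v‖ = 1 → ℓ a < ⟪v, Θ a v⟫)
    (hbad : ∃ t ∈ Icc a b, ∃ v, ‖v‖ = 1 ∧ ⟪v, Θ t v⟫ ≤ ℓ t) :
    ∃ τ ∈ Ioc a b, (∃ w, ‖w‖ = 1 ∧ ⟪w, Θ τ w⟫ ≤ ℓ τ) ∧
      ∀ t ∈ Ico a τ, ∀ v, ‖v‖ = 1 → ℓ t < ⟪v, Θ t v⟫ := by
  set S := {t ∈ Icc a b | ∃ v ∈ sphere (0 : E) 1, ⟪v, Θ t v⟫ - ℓ t ≤ 0}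
  have hS : IsCompact S :=
    isCompact_Icc.sep_exists_nonpos (isCompact_sphere 0 1)
      (f := fun p => ⟪p.2, Θ p.1 p.2⟫ - ℓ p.1)
      ((continuousOn_snd.inner ((hΘ.comp continuousOn_fst fun p hp => hp.1).clm_apply
        continuousOn_snd)).sub (hℓ.comp continuousOn_fst fun p hp => hp.1))
  have hSne : S.Nonempty := by
    obtain ⟨t, ht, v, hv, hle⟩ := hbad
    exact ⟨t, ht, v, by simpa using hv, by linarith⟩
  obtain ⟨⟨hτa, hτb⟩, w, hw, hwτ⟩ : sInf S ∈ S := hS.sInf_mem hSne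
  rw [mem_sphere_zero_iff_norm] at hw
  have hτ : a < sInf S := by
    refine lt_of_le_of_ne hτa fun h => ?_
    have := ha w hw
    rw [h] at this
    linarith
  refine ⟨sInf S, ⟨hτ, hτb⟩, ⟨w, hw, by linarith⟩, fun t ht v hv => ?_⟩
  by_contra! hle
  exact (csInf_le hS.bddBelow ⟨⟨ht.1, ht.2.le.trans hτb⟩, v, by simpa using hv, by linarith⟩
    ).not_gt ht.2

variable [CompleteSpace E] [NormedAddCommGroup F] [InnerProductSpace ℝ F] [CompleteSpace F]

lemma IsSelfAdjoint.apply_eq_smul_of_inner_eq_min {A : E →L[ℝ] E} (hA : IsSelfAdjoint A)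
    {c : ℝ} (hmin : ∀ v, ‖v‖ = 1 → c ≤ ⟪v, A v⟫) {w : E} (hw : ‖w‖ = 1) (hwc : ⟪w, A w⟫ = c) :
    A w = c • w := by
  have hext : IsMinOn A.reApplyInnerSelf (sphere 0 ‖w‖) w := fun v hv => by
    rw [mem_ofPred_eq, reApplyInnerSelf_apply, reApplyInnerSelf_apply, RCLike.re_to_real,
      RCLike.re_to_real, real_inner_comm, real_inner_comm v, hwc]
    exact hmin v (by simpa [hw] using hv)
  rw [hA.eq_smul_self_of_isLocalExtrOn_real (Or.inl hext.localize), rayleighQuotient,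
    reApplyInnerSelf_apply, RCLike.re_to_real, real_inner_comm, hwc, hw]
  simp

lemma inner_lyapunov_apply_of_apply_eq_smul {A M : E →L[ℝ] E} (D : F →L[ℝ] E) {μ : ℝ}
    (hA : IsSelfAdjoint A) {v : E} (hv : A v = μ • v) :
    ⟪v, (M ∘L A + A ∘L adjoint M + D ∘L adjoint D) v⟫ =
      2 * μ * ⟪v, M v⟫ + ‖adjoint D v‖ ^ 2 := by
  have hsymm : ⟪v, A (adjoint M v)⟫ = ⟪A v, adjoint M v⟫ := (hA.isSymmetric v _).symm
  simp only [_root_.add_apply, ContinuousLinearMap.comp_apply, inner_add_right, hv, map_smul, real_inner_smul_right]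
  rw [hsymm, hv, real_inner_smul_left, adjoint_inner_right M v v, ← adjoint_inner_left D,
    real_inner_self_eq_norm_sq, real_inner_comm (M v)]
  ring

theorem lt_inner_apply_of_barrier [FiniteDimensional ℝ E] {Θ Θ' : ℝ → E →L[ℝ] E}
    {ℓ ℓ' : ℝ → ℝ} {a b : ℝ}
    (hΘ : ∀ t ∈ Icc a b, HasDerivAt Θ (Θ' t) t) (hℓ : ∀ t ∈ Icc a b, HasDerivAt ℓ (ℓ' t) t)
    (hsa : ∀ t ∈ Icc a b, IsSelfAdjoint (Θ t))
    (ha : ∀ v, ‖v‖ = 1 → ℓ a < ⟪v, Θ a v⟫)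
    (hbarrier : ∀ t ∈ Ioc a b, ∀ v, ‖v‖ = 1 → Θ t v = ℓ t • v → ℓ' t < ⟪v, Θ' t v⟫) :
    ∀ t ∈ Icc a b, ∀ v, ‖v‖ = 1 → ℓ t < ⟪v, Θ t v⟫ := by
  by_contra! hbad
  obtain ⟨τ, ⟨hτa, hτb⟩, ⟨w, hw, hwτ⟩, hbefore⟩ := exists_first_time_inner_apply_le
    (fun t ht => (hΘ t ht).continuousAt.continuousWithinAt)
    (fun t ht => (hℓ t ht).continuousAt.continuousWithinAt) ha hbad
  have hτI : τ ∈ Icc a b := ⟨hτa.le, hτb⟩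
  have hderiv (v : E) : HasDerivAt (fun t => ⟪v, Θ t v⟫ - ℓ t) (⟪v, Θ' τ v⟫ - ℓ' τ) τ :=
    (hasDerivAt_inner_apply (hΘ τ hτI) v).sub (hℓ τ hτI)
  have hpos (v : E) (hv : ‖v‖ = 1) : ∀ᶠ t in 𝓝[<] τ, 0 < ⟪v, Θ t v⟫ - ℓ t := by
    filter_upwards [Ioo_mem_nhdsLT hτa] with t ht
    linarith [hbefore t ⟨ht.1.le, ht.2⟩ v hv]
  have hmin (v : E) (hv : ‖v‖ = 1) : ℓ τ ≤ ⟪v, Θ τ v⟫ := by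
    have := ge_of_tendsto ((hderiv v).continuousAt.tendsto.mono_left nhdsWithin_le_nhds)
      ((hpos v hv).mono fun t ht => ht.le)
    linarith
  have hwτ : ⟪w, Θ τ w⟫ = ℓ τ := le_antisymm hwτ (hmin w hw)
  have heig : Θ τ w = ℓ τ • w := (hsa τ hτI).apply_eq_smul_of_inner_eq_min hmin hw hwτ
  have := (hderiv w).nonpos_of_eventually_le_left
    ((hpos w hw).mono fun t ht => by rw [hwτ, sub_self]; exact ht.le)
  linarith [hbarrier τ ⟨hτa, hτb⟩ w hw heig]

theorem lt_inner_apply_of_hasDerivAt_lyapunov [FiniteDimensional ℝ E] {M Θ : ℝ → E →L[ℝ] E}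
    {D : ℝ → F →L[ℝ] E} {T C a ε : ℝ} (ha : 0 ≤ a) (hε : 0 < ε)
    (hM : ∀ t ∈ Icc 0 T, ‖M t‖ ≤ C) (hsa : ∀ t ∈ Icc 0 T, IsSelfAdjoint (Θ t))
    (hΘ : ∀ t ∈ Icc 0 T,
      HasDerivAt Θ (M t ∘L Θ t + Θ t ∘L adjoint (M t) + D t ∘L adjoint (D t)) t)
    (h0 : ∀ v, ‖v‖ = 1 → a ≤ ⟪v, Θ 0 v⟫) :
    ∀ t ∈ Icc 0 T, ∀ v, ‖v‖ = 1 →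
      a * exp (-(2 * C) * t) - ε * exp ((2 * C + 1) * t) < ⟪v, Θ t v⟫ := by
  have hℓ (t : ℝ) : HasDerivAt (fun s => a * exp (-(2 * C) * s) - ε * exp ((2 * C + 1) * s))
      (a * (exp (-(2 * C) * t) * -(2 * C)) - ε * (exp ((2 * C + 1) * t) * (2 * C + 1))) t := by
    refine (((hasDerivAt_id t).const_mul _).exp.const_mul a).sub
      (((hasDerivAt_id t).const_mul _).exp.const_mul ε) |>.congr_deriv ?_
    simp
  refine lt_inner_apply_of_barrier hΘ (fun t _ => hℓ t) hsa (fun v hv => ?_) ?_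
  · simp only [mul_zero, exp_zero, mul_one]
    linarith [h0 v hv]
  intro t ht v hv heig
  rw [inner_lyapunov_apply_of_apply_eq_smul _ (hsa t (Ioc_subset_Icc_self ht)) heig]
  have hMv : |⟪v, M t v⟫| ≤ C := by
    calc |⟪v, M t v⟫| ≤ ‖v‖ * ‖M t v‖ := abs_real_inner_le_norm _ _
      _ ≤ ‖v‖ * (‖M t‖ * ‖v‖) := by gcongr; exact le_opNorm _ _
      _ ≤ C := by rw [hv]; simpa using hM t (Ioc_subset_Icc_self ht)
  obtain ⟨hlo, hhi⟩ := abs_le.1 hMv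
  have hA : 0 ≤ a * exp (-(2 * C) * t) := by positivity
  have hB : 0 < ε * exp ((2 * C + 1) * t) := by positivity
  nlinarith [sq_nonneg ‖adjoint (D t) v‖, mul_le_mul_of_nonneg_left hlo hA,
    mul_le_mul_of_nonneg_left hhi hB.le]

theorem le_inner_apply_of_hasDerivAt_lyapunov [FiniteDimensional ℝ E] {M Θ : ℝ → E →L[ℝ] E}
    {D : ℝ → F →L[ℝ] E} {T C a : ℝ} (ha : 0 ≤ a)
    (hM : ∀ t ∈ Icc 0 T, ‖M t‖ ≤ C) (hsa : ∀ t ∈ Icc 0 T, IsSelfAdjoint (Θ t))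
    (hΘ : ∀ t ∈ Icc 0 T,
      HasDerivAt Θ (M t ∘L Θ t + Θ t ∘L adjoint (M t) + D t ∘L adjoint (D t)) t)
    (h0 : ∀ v, a * ‖v‖ ^ 2 ≤ ⟪v, Θ 0 v⟫) :
    ∀ t ∈ Icc 0 T, ∀ v, a * exp (-(2 * C) * t) * ‖v‖ ^ 2 ≤ ⟪v, Θ t v⟫ := by
  intro t ht
  refine le_inner_apply_of_forall_norm_eq_one fun v hv => le_of_forall_pos_lt_add fun δ hδ => ?_
  have := lt_inner_apply_of_hasDerivAt_lyapunov ha (div_pos hδ (exp_pos ((2 * C + 1) * t)))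
    hM hsa hΘ (fun v hv => by simpa [hv] using h0 v) t ht v hv
  rw [div_mul_cancel₀ _ (exp_pos _).ne'] at this
  linarith

end InnerProductSpace

section Matrix

variable {n : Type*} [Fintype n] [DecidableEq n]

lemma Matrix.toEuclideanCLM_transpose (A : Matrix n n ℝ) :
    toEuclideanCLM (𝕜 := ℝ) Aᵀ = adjoint (toEuclideanCLM (𝕜 := ℝ) A) := by
  rw [← conjTranspose_eq_transpose_of_trivial, ← star_eq_conjTranspose, map_star]
  rfl

lemma Matrix.IsSymm.isSelfAdjoint_toEuclideanCLM {A : Matrix n n ℝ} (hA : A.IsSymm) :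
    IsSelfAdjoint (toEuclideanCLM (𝕜 := ℝ) A) := by
  rw [IsSelfAdjoint, star_eq_adjoint, ← toEuclideanCLM_transpose, hA.eq]

lemma HasDerivAt.toEuclideanCLM {ϑ : ℝ → Matrix n n ℝ} {ϑ' : Matrix n n ℝ} {t : ℝ}
    (h : HasDerivAt ϑ ϑ' t) :
    HasDerivAt (fun s => Matrix.toEuclideanCLM (𝕜 := ℝ) (ϑ s))
      (Matrix.toEuclideanCLM (𝕜 := ℝ) ϑ') t :=
  (LinearMap.toContinuousLinearMap
    (Matrix.toEuclideanCLM (𝕜 := ℝ) (n := n)).toAlgEquiv.toLinearMap).hasFDerivAt.comp_hasDerivAt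
    t h

lemma Matrix.PosSemidef.inner_toEuclideanCLM_nonneg {A : Matrix n n ℝ} (hA : A.PosSemidef)
    (v : EuclideanSpace ℝ n) : 0 ≤ ⟪v, toEuclideanCLM (𝕜 := ℝ) A v⟫ :=
  (isPositive_toEuclideanLin_iff.2 hA).inner_nonneg_right v

end Matrix

lemma mvE_eq_toEuclideanCLM {n : ℕ} (A : Matrix (Fin n) (Fin n) ℝ)
    (v : EuclideanSpace ℝ (Fin n)) : mvE A v = toEuclideanCLM (𝕜 := ℝ) A v :=
  rfl

theorem stmt7_general {d : ℕ} (T CM lam₀ : ℝ)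
    (M D ϑ : ℝ → Matrix (Fin d) (Fin d) ℝ) (ϑ₀ : Matrix (Fin d) (Fin d) ℝ)
    (hMbd : ∀ t ∈ Set.Icc (0 : ℝ) T, ‖M t‖ ≤ CM)
    (hϑsymm : ∀ t ∈ Set.Icc (0 : ℝ) T, (ϑ t).IsSymm)
    (hode : ∀ t ∈ Set.Icc (0 : ℝ) T,
      HasDerivAt ϑ (M t * ϑ t + ϑ t * (M t)ᵀ + D t * (D t)ᵀ) t)
    (h0 : ϑ 0 = ϑ₀) (hϑ₀ : ϑ₀.PosSemidef)
    (hlam₀ : ∀ v : EuclideanSpace ℝ (Fin d), lam₀ * ‖v‖ ^ 2 ≤ ⟪v, mvE ϑ₀ v⟫) :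
    ∀ t ∈ Set.Icc (0 : ℝ) T, ∀ v : EuclideanSpace ℝ (Fin d),
      lam₀ * Real.exp (-2 * T * CM) * ‖v‖ ^ 2 ≤ ⟪v, mvE (ϑ t) v⟫ := by
  intro t ht v
  have hCM : 0 ≤ CM := (norm_nonneg _).trans (hMbd 0 ⟨le_rfl, ht.1.trans ht.2⟩)
  have hinit (v : EuclideanSpace ℝ (Fin d)) :
      max lam₀ 0 * ‖v‖ ^ 2 ≤ ⟪v, toEuclideanCLM (𝕜 := ℝ) (ϑ 0) v⟫ := by
    rw [h0]
    rcases le_total lam₀ 0 with h | h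
    · simpa [max_eq_right h] using hϑ₀.inner_toEuclideanCLM_nonneg v
    · simpa [max_eq_left h, mvE_eq_toEuclideanCLM] using hlam₀ v
  have hΘ (s) (hs : s ∈ Icc (0 : ℝ) T) := (hode s hs).toEuclideanCLM
  simp only [map_add, map_mul, toEuclideanCLM_transpose] at hΘ
  have key := le_inner_apply_of_hasDerivAt_lyapunov (le_max_right lam₀ 0) hMbd
    (fun s hs => (hϑsymm s hs).isSelfAdjoint_toEuclideanCLM) hΘ hinit t ht v
  have hexp : exp (-2 * T * CM) ≤ exp (-(2 * CM) * t) := exp_le_exp.2 (by nlinarith [ht.2])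
  calc lam₀ * exp (-2 * T * CM) * ‖v‖ ^ 2
      ≤ max lam₀ 0 * exp (-2 * T * CM) * ‖v‖ ^ 2 := by gcongr; exact le_max_left _ _
    _ ≤ max lam₀ 0 * exp (-(2 * CM) * t) * ‖v‖ ^ 2 := by gcongr
    _ ≤ ⟪v, mvE (ϑ t) v⟫ := key

/-- If `ϑ` solves the Lyapunov ODE
`dϑ/dt = M(t) ϑ + ϑ M(t)ᵀ + D(t) D(t)ᵀ` with `ϑ(0) = ϑ₀ ⪰ 0` and continuous `M, D`
with `‖M‖_{L^∞} ≤ CM`, then `λ_min(ϑ(t)) ≥ λ_min(ϑ₀) exp(−2T ‖M‖_{L^∞})` for `t ∈ [0,T]`,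
expressed via quadratic forms: any lower eigenvalue bound `lam₀` of `ϑ₀` yields the lower bound
`lam₀ exp(−2T CM)` for `ϑ(t)`. -/
theorem stmt7 {d : ℕ} (T CM lam₀ : ℝ) (hT : 0 < T)
    (M D ϑ : ℝ → Matrix (Fin d) (Fin d) ℝ) (ϑ₀ : Matrix (Fin d) (Fin d) ℝ)
    (hMcont : ContinuousOn M (Set.Icc 0 T)) (hDcont : ContinuousOn D (Set.Icc 0 T))
    (hMbd : ∀ t ∈ Set.Icc (0 : ℝ) T, ‖M t‖ ≤ CM)
    (hϑsymm : ∀ t ∈ Set.Icc (0 : ℝ) T, (ϑ t).IsSymm)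
    (hode : ∀ t ∈ Set.Icc (0 : ℝ) T,
      HasDerivAt ϑ (M t * ϑ t + ϑ t * (M t)ᵀ + D t * (D t)ᵀ) t)
    (h0 : ϑ 0 = ϑ₀) (hϑ₀ : ϑ₀.PosSemidef)
    (hlam₀ : ∀ v : EuclideanSpace ℝ (Fin d), lam₀ * ‖v‖ ^ 2 ≤ ⟪v, mvE ϑ₀ v⟫) :
    ∀ t ∈ Set.Icc (0 : ℝ) T, ∀ v : EuclideanSpace ℝ (Fin d),
      lam₀ * Real.exp (-2 * T * CM) * ‖v‖ ^ 2 ≤ ⟪v, mvE (ϑ t) v⟫ :=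
  stmt7_general T CM lam₀ M D ϑ ϑ₀ hMbd hϑsymm hode h0 hϑ₀ hlam₀
end
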